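/- Let W_c := {f + θ(f) : f ∈ X_c} be the graph of θ over X_c. Then S(W_c) = W_c, i.e., the center manifold is invariant under the time-one map S. -/

import Mathlib

/-! The weighted sequence space is invariant under the shifts `k ↦ k ± 1`, because the weight
changes by at most a bounded factor in one step, and the time-translate of an eternal orbit is
again an eternal orbit. Hence if `x = h 0` lies on an admissible orbit `h`, then `S x = h 1` lies
on the translate `h (· + 1)`, and `x = S (h (-1))` with `h (-1)` on the translate `h (· - 1)`. -/

section EternalOrbit

variable {X : Type*}

def IsEternalOrbit (S : X → X) (h : ℤ → X) : Prop :=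
  ∀ k, S (h (k - 1)) = h k

theorem IsEternalOrbit.comp_add_right {S : X → X} {h : ℤ → X} (horb : IsEternalOrbit S h)
    (j : ℤ) : IsEternalOrbit S (fun k => h (k + j)) := fun k => by
  simpa only [sub_add_eq_add_sub] using horb (k + j)

def IsWeightedBounded [Norm X] (w : ℤ → ℝ) (h : ℤ → X) : Prop :=
  ∃ C, ∀ k, w k * ‖h k‖ ≤ C

theorem IsWeightedBounded.comp_add_right [SeminormedAddGroup X] {w : ℤ → ℝ} {h : ℤ → X}
    (hbdd : IsWeightedBounded w h) {c : ℝ} (hc : 0 ≤ c) {j : ℤ}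
    (hw : ∀ k, w k ≤ c * w (k + j)) : IsWeightedBounded w (fun k => h (k + j)) := by
  obtain ⟨C, hC⟩ := hbdd
  refine ⟨c * C, fun k => ?_⟩
  calc w k * ‖h (k + j)‖ ≤ c * w (k + j) * ‖h (k + j)‖ := by gcongr; exact hw k
    _ = c * (w (k + j) * ‖h (k + j)‖) := mul_assoc _ _ _
    _ ≤ c * C := by gcongr; exact hC _

theorem image_setOf_isEternalOrbit_zero [SeminormedAddGroup X] {S : X → X} {w : ℤ → ℝ}
    {a b : ℝ} (ha : 0 ≤ a) (hb : 0 ≤ b) (hfwd : ∀ k, w k ≤ a * w (k + 1))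
    (hbwd : ∀ k, w k ≤ b * w (k - 1)) :
    S '' {x | ∃ h : ℤ → X, IsWeightedBounded w h ∧ IsEternalOrbit S h ∧ h 0 = x} =
      {x | ∃ h : ℤ → X, IsWeightedBounded w h ∧ IsEternalOrbit S h ∧ h 0 = x} := by
  ext x
  constructor
  · rintro ⟨_, ⟨h, hbdd, horb, rfl⟩, rfl⟩
    exact ⟨fun k => h (k + 1), hbdd.comp_add_right ha hfwd, horb.comp_add_right 1,
      by simpa using (horb 1).symm⟩
  · rintro ⟨h, hbdd, horb, rfl⟩
    have hbwd' : ∀ k, w k ≤ b * w (k + -1) := by simpa only [← sub_eq_add_neg] using hbwd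
    exact ⟨h (-1), ⟨fun k => h (k + -1), hbdd.comp_add_right hb hbwd', horb.comp_add_right (-1),
      by simp⟩, by simpa using horb 0⟩

end EternalOrbit

section DichotomyWeight

variable {Λm Λp : ℝ}

noncomputable def dichotomyWeight (Λm Λp : ℝ) (k : ℤ) : ℝ :=
  if 0 ≤ k then Λp ^ (-k) else Λm ^ (-k)

theorem dichotomyWeight_le_mul_add_one (hΛm : 0 < Λm) (hmp : Λm ≤ Λp) (k : ℤ) :
    dichotomyWeight Λm Λp k ≤ Λp * dichotomyWeight Λm Λp (k + 1) := by
  have hΛp : 0 < Λp := hΛm.trans_le hmp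
  have hk : -k = 1 + -(k + 1) := by ring
  unfold dichotomyWeight
  rcases lt_trichotomy k (-1) with hlt | rfl | hgt
  · rw [if_neg (by omega), if_neg (by omega), hk, zpow_one_add₀ hΛm.ne']
    gcongr
  · norm_num [hmp]
  · rw [if_pos (by omega), if_pos (by omega), hk, zpow_one_add₀ hΛp.ne']

theorem dichotomyWeight_le_inv_mul_sub_one (hΛm : 0 < Λm) (hmp : Λm ≤ Λp) (k : ℤ) :
    dichotomyWeight Λm Λp k ≤ Λm⁻¹ * dichotomyWeight Λm Λp (k - 1) := by
  have hΛp : 0 < Λp := hΛm.trans_le hmp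
  have hk : -k = -1 + -(k - 1) := by ring
  unfold dichotomyWeight
  rcases lt_trichotomy k 0 with hlt | rfl | hgt
  · rw [if_neg (by omega), if_neg (by omega), hk, zpow_add₀ hΛm.ne', zpow_neg_one]
  · norm_num [hΛm.ne']
  · rw [if_pos (by omega), if_pos (by omega), hk, zpow_add₀ hΛp.ne', zpow_neg_one]
    gcongr

end DichotomyWeight

theorem stmt_8_general {X : Type*} [NormedAddCommGroup X]
    (S : X → X)
    (Λm Λp : ℝ) (hΛ : 0 < Λm ∧ Λm < Λp)
    (w : ℤ → ℝ) (hw : ∀ k : ℤ, w k = if 0 ≤ k then Λp ^ (-k) else Λm ^ (-k))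
    (Wc : Set X)
    (hWcorb : ∀ x, x ∈ Wc ↔ ∃ h : ℤ → X, (∃ C, ∀ k, w k * ‖h k‖ ≤ C) ∧
      (∀ k : ℤ, S (h (k - 1)) = h k) ∧ h 0 = x) :
    S '' Wc = Wc := by
  obtain ⟨hΛm, hmp⟩ := hΛ
  obtain rfl : w = dichotomyWeight Λm Λp := funext hw
  obtain rfl : Wc = {x | ∃ h : ℤ → X, IsWeightedBounded (dichotomyWeight Λm Λp) h ∧
      IsEternalOrbit S h ∧ h 0 = x} := Set.ext hWcorb
  exact image_setOf_isEternalOrbit_zero (hΛm.trans hmp).le (inv_nonneg.mpr hΛm.le)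
    (dichotomyWeight_le_mul_add_one hΛm hmp.le) (dichotomyWeight_le_inv_mul_sub_one hΛm hmp.le)

/-- Invariance of the center manifold: `S(W_c) = W_c`, where `W_c` is the graph
of `θ` over `E_c`, characterized as the set of points lying on eternal orbits of
`S` in `ℓ_{Λ₋,Λ₊}`. -/
theorem stmt_8 {X : Type*} [NormedAddCommGroup X] [NormedSpace ℝ X]
    (Pc Ps : X →L[ℝ] X) (hproj : ∀ x, Pc x + Ps x = x)
    (S : X → X) (θ : X → X)
    (Λm Λp : ℝ) (hΛ : 0 < Λm ∧ Λm < Λp)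
    (w : ℤ → ℝ) (hw : ∀ k : ℤ, w k = if 0 ≤ k then Λp ^ (-k) else Λm ^ (-k))
    (Wc : Set X)
    (hWcdef : Wc = {x | ∃ f, Pc f = f ∧ x = f + θ f})
    (hWcorb : ∀ x, x ∈ Wc ↔ ∃ h : ℤ → X, (∃ C, ∀ k, w k * ‖h k‖ ≤ C) ∧
      (∀ k : ℤ, S (h (k - 1)) = h k) ∧ h 0 = x) :
    S '' Wc = Wc :=
  stmt_8_general S Λm Λp hΛ w hw Wc hWcorb
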